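/- arXiv:2012.15818 — 2 statements merged into one kernel-verified Lean document; each statement's English description precedes it below -/
import Mathlib

section
/- Let C(k, M−k) be a Christoffel word with k even, and let φ replace each 1 by 2 and each even-numbered occurrence of 0 by 1. Then the circular word [φ(C(k, M−k))] over the ternary alphabet {0,1,2} is balanced. -/
/-- Two words are conjugate (cyclic rotations of each other). -/
def Conj {α : Type*} (w w' : List α) : Prop := ∃ x y : List α, w = x ++ y ∧ w' = y ++ x

/-- `u` is a factor of the circular word `[w]`. -/
def CFactor {α : Type*} (u w : List α) : Prop := ∃ w' : List α, Conj w w' ∧ u <:+: w'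

/-- A (linear) word is balanced. -/
def WordIsBalanced {α : Type*} [DecidableEq α] (w : List α) : Prop :=
  ∀ u v : List α, u <:+: w → v <:+: w → u.length = v.length →
    ∀ a : α, ((u.count a : ℤ) - v.count a) ∈ ({-1, 0, 1} : Set ℤ)

/-- A circular word is balanced. -/
def CircBalanced {α : Type*} [DecidableEq α] (w : List α) : Prop :=
  ∀ u v : List α, CFactor u w → CFactor v w → u.length = v.length →
    ∀ a : α, ((u.count a : ℤ) - v.count a) ∈ ({-1, 0, 1} : Set ℤ)

/-- The n-spectrum of a circular word: Parikh vectors of its length-n factors. -/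
def circSpec {α : Type*} [DecidableEq α] (n : ℕ) (w : List α) : Set (α → ℕ) :=
  {p | ∃ u : List α, CFactor u w ∧ u.length = n ∧ (fun a => u.count a) = p}

/-- Abelian complexity of a circular word. -/
noncomputable def circAb {α : Type*} [DecidableEq α] (n : ℕ) (w : List α) : ℕ :=
  (circSpec n w).ncard

/-- A word is primitive if it is not a proper power. -/
def Primitive {α : Type*} (w : List α) : Prop :=
  ∀ (u : List α) (q : ℕ), 2 ≤ q → w ≠ (List.replicate q u).flatten

/-- The lower Christoffel word `C(k, M-k)` of length `M` with `k` zeros. -/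
def christoffel (k M : ℕ) : List (Fin 2) :=
  (List.range M).map (fun i => if i * (M - k) / M < (i + 1) * (M - k) / M then 1 else 0)

/-- Auxiliary scan for `phi`: the Boolean records whether the next occurrence
of `0` is odd-numbered. -/
def phiAux : Bool → List (Fin 2) → List (Fin 3)
  | _, [] => []
  | b, a :: t =>
    if a = 0 then (if b then (0 : Fin 3) else 1) :: phiAux (!b) t
    else (2 : Fin 3) :: phiAux b t

/-- `phi` replaces each `1` by `2` and each even-numbered occurrence of `0` by `1`. -/
def phi (w : List (Fin 2)) : List (Fin 3) := phiAux true w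

/-!
Write `F p = ⌊p n / M⌋` with `n = M - k`. The `j`-th letter of `C(k, M - k)` is `1` exactly when
`F` jumps at `j`, so among the first `p` letters of its periodic extension there are `F p` ones
and `p - F p` zeros, and `φ` sends the zeros alternately to `0` and `1`. Hence the letters
`2`, `0`, `1` occur `F p`, `⌈(p - F p) / 2⌉`, `⌊(p - F p) / 2⌋` times in a prefix of length `p`
of the periodic extension of `φ(C(k, M - k))`; this extension has period `M` because a period
contains `k` zeros, an even number. Every circular factor of length `ℓ` is a window `[p, p + ℓ)`
of it, and since `F (p + ℓ) - F p ∈ {F ℓ, F ℓ + 1}` two windows of equal length differ in every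
count by at most one.
-/

section CircularFactors

variable {α : Type*}

theorem Conj.infix_append_self {w w' : List α} (h : Conj w w') : w' <:+: w ++ w := by
  obtain ⟨x, y, rfl, rfl⟩ := h
  exact ⟨x, y, by simp⟩

theorem map_range_add (f : ℕ → α) (A B : ℕ) :
    (List.range (A + B)).map f
      = (List.range A).map f ++ (List.range B).map (fun j => f (j + A)) := by
  rw [List.range_add, List.map_append, List.map_map]
  simp [Function.comp_def, Nat.add_comm]

theorem eq_map_range_of_infix_map_range {f : ℕ → α} {N : ℕ} {u : List α}
    (h : u <:+: (List.range N).map f) :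
    ∃ p, u = (List.range u.length).map (fun j => f (j + p)) := by
  obtain ⟨s, t, hst⟩ := h
  have hlen : s.length + (u.length + t.length) = N := by
    simpa using congrArg List.length hst
  rw [← hlen, map_range_add, List.append_assoc] at hst
  obtain ⟨-, hrest⟩ := List.append_inj hst (by simp)
  rw [map_range_add] at hrest
  exact ⟨s.length, (List.append_inj hrest (by simp)).1⟩

theorem CFactor.eq_map_range {f : ℕ → α} {M : ℕ} (hper : ∀ j, f (j + M) = f j) {u : List α}
    (h : CFactor u ((List.range M).map f)) :
    ∃ p, u = (List.range u.length).map (fun j => f (j + p)) := by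
  obtain ⟨w', hconj, hu⟩ := h
  have hsquare : (List.range M).map f ++ (List.range M).map f = (List.range (M + M)).map f := by
    simp only [map_range_add, hper]
  have hw' := hconj.infix_append_self
  rw [hsquare] at hw'
  exact eq_map_range_of_infix_map_range (hu.trans hw')

end CircularFactors

namespace Nat

variable {n M : ℕ}

theorem mul_div_le_self (hn : n ≤ M) (p : ℕ) : p * n / M ≤ p :=
  Nat.div_le_of_le_mul (by rw [Nat.mul_comm M]; exact Nat.mul_le_mul_left p hn)

theorem add_mul_div_le (hM : 0 < M) (hn : n ≤ M) (p ℓ : ℕ) :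
    (p + ℓ) * n / M ≤ p * n / M + ℓ := by
  calc (p + ℓ) * n / M = (p * n + ℓ * n) / M := by rw [Nat.add_mul]
    _ ≤ (p * n + ℓ * M) / M := Nat.div_le_div_right (by gcongr)
    _ = p * n / M + ℓ := Nat.add_mul_div_right _ _ hM

theorem add_mul_div_eq_or (hM : 0 < M) (p ℓ : ℕ) :
    (p + ℓ) * n / M = p * n / M + ℓ * n / M ∨ (p + ℓ) * n / M = p * n / M + ℓ * n / M + 1 := by
  rw [Nat.add_mul, Nat.add_div hM]
  split <;> simp

theorem add_one_mul_div_eq_or (hM : 0 < M) (hn : n ≤ M) (p : ℕ) :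
    (p + 1) * n / M = p * n / M ∨ (p + 1) * n / M = p * n / M + 1 := by
  have := add_mul_div_le hM hn p 1
  have := Nat.div_le_div_right (c := M) (Nat.mul_le_mul_right n (Nat.le_add_right p 1))
  omega

end Nat

section PhiMechanical

variable (n M : ℕ)

def mechLetter (j : ℕ) : Fin 2 := if j * n / M < (j + 1) * n / M then 1 else 0

/-- `p - p * n / M` zeros of `mechLetter n M` precede position `p`, so the next one is
odd-numbered iff this number is even. -/
def nextZeroOdd (p : ℕ) : Bool := decide ((p - p * n / M) % 2 = 0)

def phiLetter (j : ℕ) : Fin 3 :=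
  if j * n / M < (j + 1) * n / M then 2 else if nextZeroOdd n M j then 0 else 1

/-- The number of occurrences of each letter among the first `p` letters of `phiLetter n M`. -/
def phiCount (p : ℕ) : Fin 3 → ℕ :=
  ![(p - p * n / M + 1) / 2, (p - p * n / M) / 2, p * n / M]

variable {n M} (hM : 0 < M) (hn : n ≤ M)
include hM hn

theorem phiAux_cons_mechLetter (p : ℕ) (t : List (Fin 2)) :
    phiAux (nextZeroOdd n M p) (mechLetter n M p :: t)
      = phiLetter n M p :: phiAux (nextZeroOdd n M (p + 1)) t := by
  have hle := Nat.mul_div_le_self hn p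
  unfold mechLetter phiLetter nextZeroOdd
  rcases Nat.add_one_mul_div_eq_or hM hn p with h | h
  · have hpar : (p + 1 - p * n / M) % 2 = 0 ↔ ¬ (p - p * n / M) % 2 = 0 := by omega
    by_cases hp : (p - p * n / M) % 2 = 0 <;> simp [h, phiAux, hpar, hp]
  · have hpar : p + 1 - (p * n / M + 1) = p - p * n / M := by omega
    simp [h, phiAux, hpar]

theorem phiAux_map_mechLetter (ℓ p : ℕ) :
    phiAux (nextZeroOdd n M p) ((List.range ℓ).map fun j => mechLetter n M (j + p))
      = (List.range ℓ).map fun j => phiLetter n M (j + p) := by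
  induction ℓ generalizing p with
  | zero => rfl
  | succ ℓ ih =>
    simp only [List.range_succ_eq_map, List.map_cons, List.map_map, Function.comp_def,
      Nat.zero_add, Nat.succ_add, ← Nat.add_succ, phiAux_cons_mechLetter hM hn, ih]

theorem phiCount_succ (p : ℕ) (a : Fin 3) :
    phiCount n M (p + 1) a = phiCount n M p a + [phiLetter n M p].count a := by
  have hle := Nat.mul_div_le_self hn p
  unfold phiCount phiLetter nextZeroOdd
  rcases Nat.add_one_mul_div_eq_or hM hn p with h | h
  · by_cases hp : (p - p * n / M) % 2 = 0 <;> fin_cases a <;> simp [h, hp] <;> omega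
  · fin_cases a <;> simp [h]

theorem phiCount_add (p ℓ : ℕ) (a : Fin 3) :
    phiCount n M (p + ℓ) a
      = phiCount n M p a + ((List.range ℓ).map fun j => phiLetter n M (j + p)).count a := by
  induction ℓ with
  | zero => simp
  | succ ℓ ih =>
    rw [← Nat.add_assoc, phiCount_succ hM hn, ih, List.range_succ, List.map_append,
      List.count_append, List.map_singleton, Nat.add_comm ℓ p, Nat.add_assoc]

theorem phiCount_window_balanced (p q ℓ : ℕ) (a : Fin 3) :
    ((phiCount n M (p + ℓ) a : ℤ) - phiCount n M p a)
      - ((phiCount n M (q + ℓ) a : ℤ) - phiCount n M q a) ∈ ({-1, 0, 1} : Set ℤ) := by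
  have := Nat.add_mul_div_eq_or (n := n) hM p ℓ
  have := Nat.add_mul_div_eq_or (n := n) hM q ℓ
  have := Nat.mul_div_le_self hn p
  have := Nat.mul_div_le_self hn q
  have := Nat.mul_div_le_self hn (p + ℓ)
  have := Nat.mul_div_le_self hn (q + ℓ)
  simp only [Set.mem_insert_iff, Set.mem_singleton_iff]
  fin_cases a <;>
    simp only [phiCount, Fin.zero_eta, Fin.mk_one, Fin.reduceFinMk, Matrix.cons_val] <;> omega

theorem phiLetter_add_period (heven : Even (M - n)) (j : ℕ) :
    phiLetter n M (j + M) = phiLetter n M j := by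
  have hshift : ∀ i, (i + M) * n / M = i * n / M + n := fun i => by
    rw [add_mul, Nat.mul_comm M n, Nat.add_mul_div_right _ _ hM]
  have hle := Nat.mul_div_le_self hn j
  obtain ⟨c, hc⟩ := heven
  have hpar : (j + M - (j * n / M + n)) % 2 = (j - j * n / M) % 2 := by omega
  simp [phiLetter, nextZeroOdd, hshift, Nat.add_right_comm j M 1, hpar]

end PhiMechanical

theorem phi_christoffel {k M : ℕ} (hM : 0 < M) :
    phi (christoffel k M) = (List.range M).map (phiLetter (M - k) M) := by
  have h := phiAux_map_mechLetter (n := M - k) hM (Nat.sub_le M k) M 0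
  rw [show nextZeroOdd (M - k) M 0 = true by simp [nextZeroOdd]] at h
  exact h

theorem stmt_15_general (k M : ℕ) (hkM : k < M) (hke : Even k) :
    CircBalanced (phi (christoffel k M)) := by
  intro u v hu hv hlen a
  have hM : 0 < M := Nat.zero_lt_of_lt hkM
  have hn : M - k ≤ M := Nat.sub_le M k
  have hper := phiLetter_add_period hM hn (by rwa [Nat.sub_sub_self hkM.le])
  rw [phi_christoffel hM] at hu hv
  obtain ⟨p, hup⟩ := CFactor.eq_map_range hper hu
  obtain ⟨q, hvq⟩ := CFactor.eq_map_range hper hv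
  have hcu := phiCount_add hM hn p u.length a
  have hcv := phiCount_add hM hn q v.length a
  rw [← hup] at hcu
  rw [← hvq, ← hlen] at hcv
  simpa [hcu, hcv] using phiCount_window_balanced hM hn p q u.length a

theorem stmt_15 (k M : ℕ) (hk : 0 < k) (hkM : k < M)
    (hcop : Nat.Coprime k (M - k)) (hke : Even k) :
    CircBalanced (phi (christoffel k M)) :=
  stmt_15_general k M hkM hke
end

section
/- Let C(k, M−k) be a Christoffel word with k odd, and let φ be the map sending every 1 to 2 and every even-numbered occurrence of 0 to 1, applied to the square C(k, M−k)^2. Then the M-spectrum of the circular word [φ(C(k,M−k)^2)] equals { ((k−1)/2)·0 + ((k+1)/2)·1 + (M−k)·2, ((k+1)/2)·0 + ((k−1)/2)·1 + (M−k)·2 }, hence has cardinality 2; in particular [φ(C(k,M−k)^2)] is primitive. -/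
/-!
Let `rho` collapse `0, 1 ↦ 0` and `2 ↦ 1`, so that `rho ∘ φ = id`. A factor of length `|v|` of the
circular word `[φ(v v)]` projects to a factor of `[v v]` of length `|v|`, that is, to a rotation of
`v`, so it contains exactly `|v|₁` letters `2`. Erasing the `2`s turns `φ(v v)` into the alternating
word `(01)^{|v|₀}`, so the other `|v|₀` letters of the factor alternate, and the factor has the Parikh
vector of `φ_b(v)` for one of the two starting parities `b` (`φ_b = phiAux b`). When `|v|₀` is odd,
`φ(v v) = φ_true(v) φ_false(v)`, so both vectors occur. For the Christoffel word, `|v|₀ = k` and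
`|v|₁ = M - k`, and primitivity follows from `gcd(k, 2(M - k)) = 1`, since the letter counts of a proper
power are divisible by the exponent.
-/

section Words

variable {α β : Type*}

theorem Conj.perm {w w' : List α} (h : Conj w w') : w.Perm w' := by
  obtain ⟨x, y, rfl, rfl⟩ := h
  exact List.perm_append_comm

theorem Conj.exists_eq_append_self {v w : List α} (h : Conj (v ++ v) w) :
    ∃ v', Conj v v' ∧ w = v' ++ v' := by
  obtain ⟨x, y, hxy, rfl⟩ := h
  rcases List.append_eq_append_iff.mp hxy with ⟨a, rfl, rfl⟩ | ⟨c, rfl, rfl⟩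
  · exact ⟨y ++ a, ⟨a, y, rfl, rfl⟩, by simp⟩
  · exact ⟨c ++ x, ⟨x, c, rfl, rfl⟩, by simp⟩

theorem conj_of_isInfix_append_self {u v : List α} (h : u <:+: v ++ v)
    (hl : u.length = v.length) : Conj v u := by
  obtain ⟨s, t, h⟩ := h
  have hlen := congrArg List.length h
  simp only [List.length_append] at hlen
  obtain ⟨r, rfl⟩ : s <+: v :=
    List.prefix_of_prefix_length_le ⟨u ++ t, by simpa using h⟩ (List.prefix_append v v) (by omega)
  refine ⟨s, r, rfl, ?_⟩
  simp only [List.append_assoc, List.append_cancel_left_eq] at h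
  simp only [List.length_append] at hl
  exact (List.append_inj (h.trans (List.append_assoc r s r).symm) (by simp; omega)).1

theorem CFactor.map (f : α → β) {u w : List α} (h : CFactor u w) :
    CFactor (u.map f) (w.map f) := by
  obtain ⟨_, ⟨x, y, rfl, rfl⟩, hu⟩ := h
  exact ⟨y.map f ++ x.map f, ⟨x.map f, y.map f, by simp, by simp⟩, by simpa using hu.map f⟩

theorem CFactor.isInfix_append_self {u w : List α} (h : CFactor u w) : u <:+: w ++ w := by
  obtain ⟨_, ⟨x, y, rfl, rfl⟩, hu⟩ := h
  exact hu.trans ⟨x, y, by simp⟩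

theorem CFactor.perm_of_append_self {u v : List α} (h : CFactor u (v ++ v))
    (hl : u.length = v.length) : u.Perm v := by
  obtain ⟨w, hw, hu⟩ := h
  obtain ⟨v', hv', rfl⟩ := hw.exists_eq_append_self
  exact (conj_of_isInfix_append_self hu (hl.trans hv'.perm.length_eq)).perm.symm.trans hv'.perm.symm

theorem primitive_of_coprime_count [DecidableEq α] {w : List α} {a b : α}
    (h : Nat.Coprime (w.count a) (w.count b)) : Primitive w := by
  rintro u q hq rfl
  have hdvd (c : α) : q ∣ ((List.replicate q u).flatten).count c :=
    ⟨u.count c, by simp [List.count_flatten, List.sum_replicate]⟩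
  have := Nat.le_of_dvd one_pos (h ▸ Nat.dvd_gcd (hdvd a) (hdvd b))
  omega

end Words

theorem countP_range_lt_succ_add {f : ℕ → ℕ} (hf : ∀ i, f i ≤ f (i + 1) ∧ f (i + 1) ≤ f i + 1)
    (N : ℕ) : (List.range N).countP (fun i => f i < f (i + 1)) + f 0 = f N := by
  induction N with
  | zero => simp
  | succ N ih =>
    rw [List.range_succ, List.countP_append]
    have := hf N
    by_cases h : f N < f (N + 1) <;> simp [h] <;> omega

def altWord : Bool → ℕ → List (Fin 3)
  | _, 0 => []
  | b, n + 1 => (if b then 0 else 1) :: altWord (!b) n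

@[simp] theorem length_altWord (b : Bool) (n : ℕ) : (altWord b n).length = n := by
  induction n generalizing b with
  | zero => rfl
  | succ n ih => simp [altWord, ih]

theorem altWord_add (b : Bool) (m n : ℕ) :
    altWord b (m + n) = altWord b m ++ altWord (b ^^ decide (Odd m)) n := by
  induction m generalizing b with
  | zero => simp [altWord]
  | succ m ih =>
    rw [Nat.add_right_comm]
    cases b <;> simp [altWord, ih, Nat.odd_add_one, -Nat.not_odd_iff_even]

theorem count_zero_altWord (b : Bool) (n : ℕ) :
    (altWord b n).count 0 = if b then (n + 1) / 2 else n / 2 := by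
  induction n generalizing b with
  | zero => simp [altWord]
  | succ n ih => cases b <;> simp [altWord, ih]; omega

theorem count_one_altWord (b : Bool) (n : ℕ) :
    (altWord b n).count 1 = if b then n / 2 else (n + 1) / 2 := by
  induction n generalizing b with
  | zero => simp [altWord]
  | succ n ih => cases b <;> simp [altWord, ih]; omega

theorem exists_eq_altWord_of_isInfix {u : List (Fin 3)} {b : Bool} {n : ℕ} (h : u <:+: altWord b n) :
    ∃ b', u = altWord b' u.length := by
  obtain ⟨s, t, h⟩ := h
  have hn : n = s.length + u.length + t.length := by
    simpa [Nat.add_assoc] using (congrArg List.length h).symm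
  rw [hn, altWord_add, altWord_add] at h
  exact ⟨_, (List.append_inj (List.append_inj h (by simp)).1 (by simp)).2⟩

def rho : Fin 3 → Fin 2 := fun x => if x = 2 then 1 else 0

@[simp] theorem length_phiAux (b : Bool) (v : List (Fin 2)) : (phiAux b v).length = v.length := by
  induction v generalizing b with
  | nil => rfl
  | cons a t ih => by_cases h : a = 0 <;> simp [phiAux, h, ih]

theorem phiAux_append (b : Bool) (v v' : List (Fin 2)) :
    phiAux b (v ++ v') = phiAux b v ++ phiAux (b ^^ decide (Odd (v.count 0))) v' := by
  induction v generalizing b with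
  | nil => simp [phiAux]
  | cons a t ih =>
    by_cases h : a = 0
    · cases b <;> simp [phiAux, h, ih, Nat.odd_add_one, -Nat.not_odd_iff_even]
    · simp [phiAux, h, ih]

theorem map_rho_phiAux (b : Bool) (v : List (Fin 2)) : (phiAux b v).map rho = v := by
  induction v generalizing b with
  | nil => rfl
  | cons a t ih => fin_cases a <;> cases b <;> simp [phiAux, ih, rho]

theorem filter_phiAux (b : Bool) (v : List (Fin 2)) :
    (phiAux b v).filter (· ≠ 2) = altWord b (v.count 0) := by
  induction v generalizing b with
  | nil => rfl
  | cons a t ih => fin_cases a <;> cases b <;> simp_all [phiAux, altWord]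

theorem count_two_eq_count_map_rho (u : List (Fin 3)) : u.count 2 = (u.map rho).count 1 := by
  induction u with
  | nil => rfl
  | cons a t ih => fin_cases a <;> simp [rho, ih]

theorem count_zero_add_count_one (v : List (Fin 2)) : v.count 0 + v.count 1 = v.length := by
  induction v with
  | nil => rfl
  | cons a t ih => fin_cases a <;> simp <;> omega

theorem length_filter_ne_two_add_count_two (u : List (Fin 3)) :
    (u.filter (· ≠ 2)).length + u.count 2 = u.length := by
  rw [← List.countP_eq_length_filter, List.count, List.length_eq_countP_add_countP (· ≠ 2) (l := u)]
  simp [Bool.beq_eq_decide_eq]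

theorem count_two_phiAux (b : Bool) (v : List (Fin 2)) : (phiAux b v).count 2 = v.count 1 := by
  rw [count_two_eq_count_map_rho, map_rho_phiAux]

theorem count_eq_ite_filter (u : List (Fin 3)) (a : Fin 3) :
    u.count a = if a = 2 then u.count 2 else (u.filter (· ≠ 2)).count a := by
  split_ifs with ha
  · rw [ha]
  · exact (List.count_filter (by simpa)).symm

theorem count_phiAux (b : Bool) (v : List (Fin 2)) (a : Fin 3) :
    (phiAux b v).count a = if a = 2 then v.count 1 else (altWord b (v.count 0)).count a := by
  rw [count_eq_ite_filter, count_two_phiAux, filter_phiAux]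

theorem phi_append_self {v : List (Fin 2)} (hv : Odd (v.count 0)) :
    phi (v ++ v) = phiAux true v ++ phiAux false v := by
  simp [phi, phiAux_append, hv]

theorem cfactor_phiAux_phi_append_self {v : List (Fin 2)} (hv : Odd (v.count 0)) (b : Bool) :
    CFactor (phiAux b v) (phi (v ++ v)) := by
  rw [phi_append_self hv]
  cases b
  · exact ⟨_, ⟨phiAux true v, phiAux false v, rfl, rfl⟩, (List.prefix_append _ _).isInfix⟩
  · exact ⟨_, ⟨[], _, rfl, (List.append_nil _).symm⟩, (List.prefix_append _ _).isInfix⟩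

theorem exists_filter_eq_altWord_of_cfactor {u : List (Fin 3)} {v : List (Fin 2)} {b : Bool}
    (h : CFactor u (phiAux b (v ++ v))) :
    ∃ b', u.filter (· ≠ 2) = altWord b' (u.filter (· ≠ 2)).length := by
  have hsq : (phiAux b (v ++ v) ++ phiAux b (v ++ v)).filter (· ≠ 2) =
      altWord b ((v ++ v).count 0 + (v ++ v).count 0) := by
    have heven : ¬Odd ((v ++ v).count 0) := Nat.not_odd_iff_even.mpr ⟨_, List.count_append⟩
    rw [List.filter_append, filter_phiAux, altWord_add, decide_eq_false heven, Bool.xor_false]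
  exact exists_eq_altWord_of_isInfix (hsq ▸ h.isInfix_append_self.filter _)

theorem exists_count_eq_phiAux_of_cfactor {u : List (Fin 3)} {v : List (Fin 2)} {b : Bool}
    (h : CFactor u (phiAux b (v ++ v))) (hl : u.length = v.length) :
    ∃ b', ∀ a, u.count a = (phiAux b' v).count a := by
  have h2 : u.count 2 = v.count 1 := by
    have hrho := h.map rho
    rw [map_rho_phiAux] at hrho
    have hperm := hrho.perm_of_append_self (by simpa using hl)
    rw [count_two_eq_count_map_rho, hperm.count_eq]
  have hfl : (u.filter (· ≠ 2)).length = v.count 0 := by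
    have := length_filter_ne_two_add_count_two u
    have := count_zero_add_count_one v
    omega
  obtain ⟨b', hb'⟩ := exists_filter_eq_altWord_of_cfactor h
  rw [hfl] at hb'
  exact ⟨b', fun a => by rw [count_eq_ite_filter, h2, hb', count_phiAux]⟩

theorem circSpec_length_phi_append_self {v : List (Fin 2)} (hv : Odd (v.count 0)) :
    circSpec v.length (phi (v ++ v)) = Set.range fun b a => (phiAux b v).count a := by
  ext p
  constructor
  · rintro ⟨u, hu, hl, rfl⟩
    obtain ⟨b, hb⟩ := exists_count_eq_phiAux_of_cfactor hu hl
    exact ⟨b, funext fun a => (hb a).symm⟩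
  · rintro ⟨b, rfl⟩
    exact ⟨phiAux b v, cfactor_phiAux_phi_append_self hv b, length_phiAux b v, rfl⟩

theorem primitive_phi_append_self {v : List (Fin 2)} (hv : Odd (v.count 0))
    (hcop : Nat.Coprime (v.count 0) (v.count 1)) : Primitive (phi (v ++ v)) := by
  refine primitive_of_coprime_count (a := 0) (b := 2) ?_
  have h0 : (phi (v ++ v)).count 0 = v.count 0 := by
    simp [phi, count_phiAux, count_zero_altWord]
    omega
  have h2 : (phi (v ++ v)).count 2 = 2 * v.count 1 := by
    simp [phi, count_two_phiAux]
    omega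
  rw [h0, h2]
  exact Nat.Coprime.mul_right (Odd.coprime_two_right hv) hcop

@[simp] theorem christoffel_length (k M : ℕ) : (christoffel k M).length = M := by
  simp [christoffel]

theorem christoffel_count_one (k M : ℕ) : (christoffel k M).count 1 = M - k := by
  rcases Nat.eq_zero_or_pos M with rfl | hM
  · simp [christoffel]
  have hf (i : ℕ) : i * (M - k) / M ≤ (i + 1) * (M - k) / M ∧
      (i + 1) * (M - k) / M ≤ i * (M - k) / M + 1 := by
    refine ⟨Nat.div_le_div_right (by gcongr; omega), ?_⟩
    calc (i + 1) * (M - k) / M ≤ (i * (M - k) + M) / M := Nat.div_le_div_right (by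
          rw [add_mul, one_mul]; omega)
      _ = i * (M - k) / M + 1 := Nat.add_div_right _ hM
  have h := countP_range_lt_succ_add hf M
  rw [Nat.zero_mul, Nat.zero_div, add_zero, Nat.mul_div_cancel_left _ hM] at h
  rw [← h, christoffel, List.count, List.countP_map]
  exact List.countP_congr fun i _ => by simp only [Function.comp_apply]; split_ifs <;> simp_all

theorem christoffel_count_zero {k M : ℕ} (h : k ≤ M) : (christoffel k M).count 0 = k := by
  have := count_zero_add_count_one (christoffel k M)
  rw [christoffel_count_one, christoffel_length] at this
  omega

theorem stmt_17_general (k M : ℕ) (hkM : k < M)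
    (hcop : Nat.Coprime k (M - k)) (hko : Odd k) :
    circSpec M (phi (christoffel k M ++ christoffel k M)) =
      {fun a : Fin 3 => if a = 0 then (k - 1) / 2 else if a = 1 then (k + 1) / 2 else M - k,
       fun a : Fin 3 => if a = 0 then (k + 1) / 2 else if a = 1 then (k - 1) / 2 else M - k} ∧
    (circSpec M (phi (christoffel k M ++ christoffel k M))).ncard = 2 ∧
    Primitive (phi (christoffel k M ++ christoffel k M)) := by
  have hC0 : (christoffel k M).count 0 = k := christoffel_count_zero hkM.le
  have hC1 : (christoffel k M).count 1 = M - k := christoffel_count_one k M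
  have hparikh (b : Bool) : (fun a => (phiAux b (christoffel k M)).count a) =
      fun a : Fin 3 => if a = 0 then (if b then (k + 1) / 2 else (k - 1) / 2) else
        if a = 1 then (if b then (k - 1) / 2 else (k + 1) / 2) else M - k := by
    obtain ⟨t, rfl⟩ := hko
    funext a
    fin_cases a <;> cases b <;>
      simp [count_phiAux, count_zero_altWord, count_one_altWord, hC0, hC1] <;> omega
  have hv : Odd ((christoffel k M).count 0) := by rwa [hC0]
  have hspec := circSpec_length_phi_append_self hv
  rw [christoffel_length] at hspec
  rw [hspec, Bool.range_eq, hparikh, hparikh]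
  simp only [Bool.false_eq_true, if_false, if_true, true_and]
  refine ⟨Set.ncard_pair fun h => ?_, primitive_phi_append_self hv (by rwa [hC0, hC1])⟩
  have := congrFun h 0
  obtain ⟨t, rfl⟩ := hko
  simp at this
  omega

theorem stmt_17 (k M : ℕ) (hk : 0 < k) (hkM : k < M)
    (hcop : Nat.Coprime k (M - k)) (hko : Odd k) :
    circSpec M (phi (christoffel k M ++ christoffel k M)) =
      {fun a : Fin 3 => if a = 0 then (k - 1) / 2 else if a = 1 then (k + 1) / 2 else M - k,
       fun a : Fin 3 => if a = 0 then (k + 1) / 2 else if a = 1 then (k - 1) / 2 else M - k} ∧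
    (circSpec M (phi (christoffel k M ++ christoffel k M))).ncard = 2 ∧
    Primitive (phi (christoffel k M ++ christoffel k M)) :=
  stmt_17_general k M hkM hcop hko
end
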